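/- arXiv:1506.03556 — 5 statements merged into one kernel-verified Lean document; each statement's English description precedes it below -/
import Mathlib

section
/- Let M be a finite type of modes, E a type of states, and call a quadruple (m₁, G, U, m₂) — with m₁, m₂ modes, G ⊆ E a guard and U : E → E an update — a transition. A family of functions V assigning to each mode a function E → ℝ satisfies the transition constraint for a transition (m₁, G, U, m₂) if for all x ∈ G, V m₂ (U x) ≤ V m₁ x. Let m_c be a mode not in M (model the relaxed mode set as Option M, with m_c = none), let T be a set of transitions whose source and target modes lie in M, and let T♯ be a set of transitions over the relaxed mode set such that for every transition t = (m₁, G, U, m₂) ∈ T, either t ∈ T♯, or both the split transitions (m₁, G, id, m_c) and (m_c, G, U, m₂) belong to T♯. Then: if a family V indexed by the relaxed mode set satisfies the transition constraint for every transition in T♯, then V satisfies the transition constraint for every transition in T. -/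
/-- Preservation of the transition constraints under the
graph-structure relaxation.  Modes of the original automaton form a finite
type `M`; the relaxed mode set is `Option M` with the central mode
`m_c = none`.  A transition is a quadruple `(m₁, G, U, m₂)`. -/
theorem relaxation_preserves_transition_constraints
    {M E : Type*} [Fintype M]
    (T : Set (M × Set E × (E → E) × M))
    (Tsharp : Set (Option M × Set E × (E → E) × Option M))
    (hsplit : ∀ t ∈ T,
      ((some t.1, t.2.1, t.2.2.1, some t.2.2.2) ∈ Tsharp) ∨
      (((some t.1, t.2.1, (id : E → E), (none : Option M)) ∈ Tsharp) ∧
       (((none : Option M), t.2.1, t.2.2.1, some t.2.2.2) ∈ Tsharp)))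
    (V : Option M → E → ℝ)
    (hV : ∀ t ∈ Tsharp, ∀ x ∈ t.2.1, V t.2.2.2 (t.2.2.1 x) ≤ V t.1 x) :
    ∀ t ∈ T, ∀ x ∈ t.2.1, V (some t.2.2.2) (t.2.2.1 x) ≤ V (some t.1) x := by
  intro t ht x hx
  rcases hsplit t ht with h | ⟨h1, h2⟩
  · exact hV _ h x hx
  · exact (hV _ h2 x hx).trans (hV _ h1 x hx)
end

section
/- Let E be a real normed space, Inv ⊆ E, and let V₁, …, V_k : E → ℝ (indexed by Fin k) be functions such that for each i there exist class K∞ functions α_i and β_i with α_i ‖x‖ ≤ V_i x ≤ β_i ‖x‖ for all x ∈ Inv. Then for any nonnegative reals λ₁, …, λ_k with at least one λ_i strictly positive, there exist class K∞ functions α and β such that the conical combination W = ∑ i, λ_i • V_i satisfies α ‖x‖ ≤ W x ≤ β ‖x‖ for all x ∈ Inv (one may take α = ∑ i, λ_i • α_i and β = ∑ i, λ_i • β_i). -/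
open Filter

/-- A function `α : ℝ → ℝ` is of class K∞. -/
def ClassKInf (α : ℝ → ℝ) : Prop :=
  Continuous α ∧ α 0 = 0 ∧ StrictMonoOn α (Set.Ici (0 : ℝ)) ∧
    Tendsto α atTop atTop

namespace ClassKInf

variable {α : ℝ → ℝ}

theorem continuous (hα : ClassKInf α) : Continuous α :=
  hα.1

theorem map_zero (hα : ClassKInf α) : α 0 = 0 :=
  hα.2.1

theorem strictMonoOn (hα : ClassKInf α) : StrictMonoOn α (Set.Ici 0) :=
  hα.2.2.1

theorem monotoneOn (hα : ClassKInf α) : MonotoneOn α (Set.Ici 0) :=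
  hα.strictMonoOn.monotoneOn

theorem tendsto_atTop (hα : ClassKInf α) : Tendsto α atTop atTop :=
  hα.2.2.2

theorem nonneg (hα : ClassKInf α) {r : ℝ} (hr : 0 ≤ r) : 0 ≤ α r :=
  hα.map_zero ▸ hα.monotoneOn Set.self_mem_Ici hr hr

end ClassKInf

/-- Only one positive weight is needed: its term alone already forces strict growth and
unboundedness, while every other term is merely monotone and nonnegative on `[0, ∞)`. -/
theorem classKInf_sum_smul {ι : Type*} [Fintype ι] (α : ι → ℝ → ℝ)
    (hα : ∀ i, ClassKInf (α i)) (lam : ι → ℝ) (hnn : ∀ i, 0 ≤ lam i) (hpos : ∃ i, 0 < lam i) :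
    ClassKInf (fun r => ∑ i, lam i • α i r) := by
  obtain ⟨j, hj⟩ := hpos
  refine ⟨continuous_finsetSum _ fun i _ => (hα i).continuous.const_smul (lam i), by simp [(hα _).map_zero],
    fun x hx y hy hxy => ?_, ?_⟩
  · refine Finset.sum_lt_sum (fun i _ => ?_) ⟨j, Finset.mem_univ j, ?_⟩
    · exact smul_le_smul_of_nonneg_left ((hα i).monotoneOn hx hy hxy.le) (hnn i)
    · exact smul_lt_smul_of_pos_left ((hα j).strictMonoOn hx hy hxy) hj
  · have hterm : Tendsto (fun r => lam j • α j r) atTop atTop :=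
      (tendsto_const_mul_atTop_of_pos hj).2 (hα j).tendsto_atTop
    refine tendsto_atTop_mono' _ ?_ hterm
    filter_upwards [eventually_ge_atTop 0] with r hr
    exact Finset.single_le_sum (fun i _ => smul_nonneg (hnn i) ((hα i).nonneg hr))
      (Finset.mem_univ j)

/-- conical combinations of functions satisfying the K∞
sandwich bound on an invariant set again satisfy such a bound, with the
conical combinations of the bounding functions as witnesses. -/
theorem sandwich_conical_combination
    {E : Type*} [NormedAddCommGroup E] [NormedSpace ℝ E]
    (Inv : Set E) {k : ℕ}
    (V : Fin k → E → ℝ)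
    (α β : Fin k → ℝ → ℝ)
    (hαK : ∀ i, ClassKInf (α i)) (hβK : ∀ i, ClassKInf (β i))
    (hbound : ∀ i, ∀ x ∈ Inv, α i ‖x‖ ≤ V i x ∧ V i x ≤ β i ‖x‖)
    (lam : Fin k → ℝ) (hnn : ∀ i, 0 ≤ lam i) (hpos : ∃ i, 0 < lam i) :
    ∃ a b : ℝ → ℝ, ClassKInf a ∧ ClassKInf b ∧
      (a = fun r => ∑ i, lam i • α i r) ∧
      (b = fun r => ∑ i, lam i • β i r) ∧
      ∀ x ∈ Inv,
        a ‖x‖ ≤ (∑ i, lam i • V i x) ∧ (∑ i, lam i • V i x) ≤ b ‖x‖ := by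
  refine ⟨_, _, classKInf_sum_smul α hαK lam hnn hpos, classKInf_sum_smul β hβK lam hnn hpos,
    rfl, rfl, fun x hx => ⟨?_, ?_⟩⟩
  · exact Finset.sum_le_sum fun i _ => smul_le_smul_of_nonneg_left (hbound i x hx).1 (hnn i)
  · exact Finset.sum_le_sum fun i _ => smul_le_smul_of_nonneg_left (hbound i x hx).2 (hnn i)
end

section
/- Let E = EuclideanSpace ℝ (Fin n), let Inv ⊆ E, let f : E → E, and let V₁, …, V_k : E → ℝ (indexed by Fin k) be differentiable functions such that for each i there exists a class K∞ function γ_i with ⟪gradient V_i x, f x⟫ ≤ −γ_i ‖x‖ for all x ∈ Inv. Then for any nonnegative reals λ₁, …, λ_k with at least one λ_i strictly positive, the conical combination W = ∑ i, λ_i • V_i is differentiable and there exists a class K∞ function γ (namely γ = ∑ i, λ_i • γ_i) with ⟪gradient W x, f x⟫ ≤ −γ ‖x‖ for all x ∈ Inv. -/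
open Filter

namespace ClassKInf

variable {α : ℝ → ℝ}

theorem sum_smul {ι : Type*} [Fintype ι] {α : ι → ℝ → ℝ} (hα : ∀ i, ClassKInf (α i))
    {c : ι → ℝ} (hc : ∀ i, 0 ≤ c i) (hpos : ∃ i, 0 < c i) :
    ClassKInf fun r => ∑ i, c i • α i r := by
  obtain ⟨i₀, hi₀⟩ := hpos
  refine ⟨?_, ?_, ?_, ?_⟩
  · exact continuous_finsetSum _ fun i _ => continuous_const.mul (hα i).1
  · simp [fun i => (hα i).2.1]
  · intro a ha b hb hab
    refine Finset.sum_lt_sum (fun i _ => ?_) ⟨i₀, Finset.mem_univ _, ?_⟩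
    · exact smul_le_smul_of_nonneg_left ((hα i).2.2.1.monotoneOn ha hb hab.le) (hc i)
    · exact smul_lt_smul_of_pos_left ((hα i₀).2.2.1 ha hb hab) hi₀
  · refine tendsto_atTop_mono' atTop ?_ ((hα i₀).2.2.2.const_mul_atTop hi₀)
    filter_upwards [eventually_ge_atTop (0 : ℝ)] with r hr
    exact Finset.single_le_sum (fun i _ => smul_nonneg (hc i) ((hα i).nonneg hr))
      (Finset.mem_univ i₀)

end ClassKInf

theorem hasGradientAt_sum_smul {ι F : Type*} [Fintype ι] [NormedAddCommGroup F]
    [InnerProductSpace ℝ F] [CompleteSpace F] {V : ι → F → ℝ} {x : F}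
    (hV : ∀ i, DifferentiableAt ℝ (V i) x) (c : ι → ℝ) :
    HasGradientAt (fun x => ∑ i, c i • V i x) (∑ i, c i • gradient (V i) x) x := by
  rw [hasGradientAt_iff_hasFDerivAt, map_sum]
  simp only [map_smul]
  exact HasFDerivAt.fun_sum fun i _ => (hV i).hasGradientAt.hasFDerivAt.const_smul (c i)

/-- conical combinations of differentiable functions satisfying
the Lyapunov flow constraint on an invariant set again satisfy it, with the
conical combination of the K∞ bounds as witness. -/
theorem flow_constraint_conical_combination
    {n : ℕ} (Inv : Set (EuclideanSpace ℝ (Fin n)))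
    (f : EuclideanSpace ℝ (Fin n) → EuclideanSpace ℝ (Fin n))
    {k : ℕ} (V : Fin k → EuclideanSpace ℝ (Fin n) → ℝ)
    (hVdiff : ∀ i, Differentiable ℝ (V i))
    (γ : Fin k → ℝ → ℝ) (hγK : ∀ i, ClassKInf (γ i))
    (hflow : ∀ i, ∀ x ∈ Inv,
      inner (𝕜 := ℝ) (gradient (V i) x) (f x) ≤ -(γ i ‖x‖))
    (lam : Fin k → ℝ) (hnn : ∀ i, 0 ≤ lam i) (hpos : ∃ i, 0 < lam i) :
    Differentiable ℝ (fun x => ∑ i, lam i • V i x) ∧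
    ∃ g : ℝ → ℝ, ClassKInf g ∧ (g = fun r => ∑ i, lam i • γ i r) ∧
      ∀ x ∈ Inv,
        inner (𝕜 := ℝ) (gradient (fun x => ∑ i, lam i • V i x) x) (f x)
          ≤ -(g ‖x‖) := by
  have hgrad x := hasGradientAt_sum_smul (fun i => hVdiff i x) lam
  refine ⟨fun x => (hgrad x).differentiableAt, _, ClassKInf.sum_smul hγK hnn hpos, rfl,
    fun x hx => ?_⟩
  calc inner ℝ (gradient (fun x => ∑ i, lam i • V i x) x) (f x)
      = ∑ i, lam i * inner ℝ (gradient (V i) x) (f x) := by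
        simp only [(hgrad x).gradient, sum_inner, real_inner_smul_left]
    _ ≤ ∑ i, lam i * -(γ i ‖x‖) :=
        Finset.sum_le_sum fun i _ => mul_le_mul_of_nonneg_left (hflow i x hx) (hnn i)
    _ = -∑ i, lam i • γ i ‖x‖ := by simp [smul_eq_mul]
end

section
/- Let E be a real normed space, let α and β be class K∞ functions, let V : E → ℝ, and let x : ℝ → E be such that α ‖x t‖ ≤ V (x t) ≤ β ‖x t‖ for all t ≥ 0 and such that t ↦ V (x t) is antitone on [0, ∞). Then for every ε > 0 there exists δ > 0 such that ‖x 0‖ < δ implies ‖x t‖ < ε for all t ≥ 0. -/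
open Filter

/-- the K∞ sandwich bound together with monotone decrease of the
Lyapunov function value along a trajectory yields Lyapunov stability. -/
theorem lyapunov_stability_from_sandwich
    {E : Type*} [NormedAddCommGroup E] [NormedSpace ℝ E]
    (α β : ℝ → ℝ) (hα : ClassKInf α) (hβ : ClassKInf β)
    (V : E → ℝ) (x : ℝ → E)
    (hbound : ∀ t ≥ (0 : ℝ), α ‖x t‖ ≤ V (x t) ∧ V (x t) ≤ β ‖x t‖)
    (hdec : AntitoneOn (fun t => V (x t)) (Set.Ici (0 : ℝ))) :
    ∀ ε > (0 : ℝ), ∃ δ > (0 : ℝ), ‖x 0‖ < δ → ∀ t ≥ (0 : ℝ), ‖x t‖ < ε := by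
  obtain ⟨hαc, hα0, hαm, hαt⟩ := hα
  obtain ⟨hβc, hβ0, hβm, hβt⟩ := hβ
  intro ε hε
  have hαε : 0 < α ε := by
    have := hαm (Set.mem_Ici.mpr le_rfl) (Set.mem_Ici.mpr hε.le) hε
    rwa [hα0] at this
  have hcont : ContinuousAt β 0 := hβc.continuousAt
  rw [Metric.continuousAt_iff] at hcont
  obtain ⟨δ, hδ, hδspec⟩ := hcont (α ε) hαε
  refine ⟨δ, hδ, fun h0 t ht => ?_⟩
  have hb0 := hbound 0 le_rfl
  have hbt := hbound t ht
  have hβx0 : β ‖x 0‖ < α ε := by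
    have := hδspec (x := ‖x 0‖) (by simpa [Real.dist_eq, abs_of_nonneg (norm_nonneg _)] using h0)
    rw [Real.dist_eq, hβ0, sub_zero] at this
    exact lt_of_le_of_lt (le_abs_self _) this
  have hVt : V (x t) ≤ V (x 0) := hdec (Set.mem_Ici.mpr le_rfl) (Set.mem_Ici.mpr ht) ht
  have hαxt : α ‖x t‖ < α ε :=
    lt_of_le_of_lt (hbt.1.trans (hVt.trans hb0.2)) hβx0
  by_contra hcon
  push_neg at hcon
  exact absurd (hαm.monotoneOn (Set.mem_Ici.mpr hε.le) (Set.mem_Ici.mpr (norm_nonneg _)) hcon)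
    (not_le.mpr hαxt)
end

section
/- Let γ : ℝ → ℝ be continuous with γ 0 = 0 and γ strictly increasing on [0, ∞), and let g : ℝ → ℝ be differentiable on [0, ∞) with g t ≥ 0 for all t ≥ 0 and deriv g t ≤ −γ (g t) for all t ≥ 0. Then g t → 0 as t → ∞. -/
/-!
Since `γ ≥ 0` on `[0, ∞)`, the function `g` is antitone there. If `g T ≥ ε > 0`, then `g ≥ ε`
on `[0, T]`, so `g' ≤ -γ ε < 0` there and `0 < ε ≤ g T ≤ g 0 - γ ε * T`. Hence `g t < ε` as soon
as `t > g 0 / γ ε`, while `g t ≥ 0` throughout.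
-/

open Filter Set

variable {γ g : ℝ → ℝ}

lemma sub_le_mul_sub_of_deriv_le_on_Icc {a b C : ℝ} (hab : a ≤ b)
    (hdiff : ∀ t ∈ Icc a b, DifferentiableAt ℝ g t) (hderiv : ∀ t ∈ Icc a b, deriv g t ≤ C) :
    g b - g a ≤ C * (b - a) :=
  (convex_Icc a b).image_sub_le_mul_sub_of_deriv_le
    (fun t ht => (hdiff t ht).continuousAt.continuousWithinAt)
    (fun t ht => (hdiff t (interior_subset ht)).differentiableWithinAt)
    (fun t ht => hderiv t (interior_subset ht)) a (left_mem_Icc.2 hab) b (right_mem_Icc.2 hab) hab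

lemma antitoneOn_Ici_of_deriv_nonpos {a : ℝ} (hdiff : ∀ t ≥ a, DifferentiableAt ℝ g t)
    (hderiv : ∀ t ≥ a, deriv g t ≤ 0) : AntitoneOn g (Ici a) := by
  intro s hs t _ hst
  have := sub_le_mul_sub_of_deriv_le_on_Icc hst (fun u hu => hdiff u (hs.trans hu.1))
    (fun u hu => hderiv u (hs.trans hu.1))
  linarith

lemma lt_of_div_lt_of_deriv_le_neg_comp (hγ0 : γ 0 = 0) (hγmono : StrictMonoOn γ (Ici 0))
    (hgdiff : ∀ t ≥ (0 : ℝ), DifferentiableAt ℝ g t) (hgnn : ∀ t ≥ (0 : ℝ), 0 ≤ g t)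
    (hgderiv : ∀ t ≥ (0 : ℝ), deriv g t ≤ -γ (g t)) {ε T : ℝ} (hε : 0 < ε)
    (hT : g 0 / γ ε < T) : g T < ε := by
  have hγε : 0 < γ ε := hγ0 ▸ hγmono self_mem_Ici hε.le hε
  have hT0 : 0 < T := (div_nonneg (hgnn 0 le_rfl) hγε.le).trans_lt hT
  have hanti : AntitoneOn g (Ici 0) := antitoneOn_Ici_of_deriv_nonpos hgdiff fun t ht =>
    (hgderiv t ht).trans <| neg_nonpos.2 <|
      hγ0 ▸ hγmono.monotoneOn self_mem_Ici (hgnn t ht) (hgnn t ht)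
  by_contra! hεT
  have hderiv : ∀ t ∈ Icc 0 T, deriv g t ≤ -γ ε := fun t ht =>
    (hgderiv t ht.1).trans <| neg_le_neg <| hγmono.monotoneOn hε.le (hgnn t ht.1) <|
      hεT.trans (hanti ht.1 hT0.le ht.2)
  have hdecay := sub_le_mul_sub_of_deriv_le_on_Icc hT0.le (fun t ht => hgdiff t ht.1) hderiv
  have hγεT : g 0 < γ ε * T := (div_lt_iff₀' hγε).1 hT
  linarith

theorem comparison_lemma_tendsto_zero_general
    (γ : ℝ → ℝ) (hγ0 : γ 0 = 0)
    (hγmono : StrictMonoOn γ (Set.Ici (0 : ℝ)))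
    (g : ℝ → ℝ)
    (hgdiff : ∀ t ≥ (0 : ℝ), DifferentiableAt ℝ g t)
    (hgnn : ∀ t ≥ (0 : ℝ), 0 ≤ g t)
    (hgderiv : ∀ t ≥ (0 : ℝ), deriv g t ≤ -γ (g t)) :
    Tendsto g atTop (nhds 0) :=
  tendsto_order.2
    ⟨fun _ ha => (eventually_ge_atTop 0).mono fun t ht => ha.trans_le (hgnn t ht),
      fun _ hε => (eventually_gt_atTop _).mono fun _ hT =>
        lt_of_div_lt_of_deriv_le_neg_comp hγ0 hγmono hgdiff hgnn hgderiv hε hT⟩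

/-- comparison lemma underlying global attractivity.  If `g` is
nonnegative and differentiable on `[0, ∞)` with `g' t ≤ -γ (g t)` for a
continuous function `γ` vanishing at `0` and strictly increasing on
`[0, ∞)`, then `g t → 0` as `t → ∞`. -/
theorem comparison_lemma_tendsto_zero
    (γ : ℝ → ℝ) (hγc : Continuous γ) (hγ0 : γ 0 = 0)
    (hγmono : StrictMonoOn γ (Set.Ici (0 : ℝ)))
    (g : ℝ → ℝ)
    (hgdiff : ∀ t ≥ (0 : ℝ), DifferentiableAt ℝ g t)
    (hgnn : ∀ t ≥ (0 : ℝ), 0 ≤ g t)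
    (hgderiv : ∀ t ≥ (0 : ℝ), deriv g t ≤ -γ (g t)) :
    Tendsto g atTop (nhds 0) :=
  comparison_lemma_tendsto_zero_general γ hγ0 hγmono g hgdiff hgnn hgderiv
end
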